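/- arXiv:2306.09041 — 7 statements merged into one kernel-verified Lean document; each statement's English description precedes it below -/
import Mathlib

section
/- Let A be a 3×3 real matrix whose third row is the negation of the sum of its first two rows, i.e. A(3,j) = −(A(1,j) + A(2,j)) for j = 1,2,3. Define the 2×2 matrix B by B(i,j) = A(i,j) − A(i,3) for i,j ∈ {1,2}. Then the characteristic polynomial of A factors as p_A(X) = X · p_B(X), where p_A and p_B denote the characteristic polynomials of A and B respectively. -/
/-!
The column sums of `A` vanish, i.e. `(1, …, 1)` is a left null vector. Conjugating `A` by the
shear that replaces the last coordinate with the sum of all coordinates therefore produces a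
matrix whose last row is zero and whose leading principal block is `B`; expanding the
characteristic determinant along that zero row gives `X · p_B`.
-/

open Polynomial

namespace Matrix

variable {R : Type*} [CommRing R]

theorem charmatrix_submatrix {m n : Type*} [Fintype m] [DecidableEq m] [Fintype n] [DecidableEq n]
    (M : Matrix n n R) {e : m → n} (he : Function.Injective e) :
    M.charmatrix.submatrix e e = (M.submatrix e e).charmatrix := by
  ext i j
  simp only [submatrix_apply, charmatrix_apply, diagonal_apply, he.eq_iff]

variable {n : ℕ}

theorem charpoly_eq_mul_charpoly_submatrix_castSucc (M : Matrix (Fin (n + 1)) (Fin (n + 1)) R)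
    (hM : ∀ j : Fin n, M (Fin.last n) j.castSucc = 0) :
    M.charpoly = (X - C (M (Fin.last n) (Fin.last n))) *
      (M.submatrix Fin.castSucc Fin.castSucc).charpoly := by
  rw [charpoly, det_succ_row _ (Fin.last n), Fin.sum_univ_castSucc, Finset.sum_eq_zero, zero_add]
  · simp [charpoly, charmatrix_apply_eq, charmatrix_submatrix _ (Fin.castSucc_injective n)]
  · intro j _
    rw [charmatrix_apply_ne _ _ _ (Fin.castSucc_lt_last j).ne', hM, C_0, neg_zero, mul_zero,
      zero_mul]

/-- Acting on column vectors, `shearLastRow 1` replaces the last coordinate by the sum of all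
coordinates. -/
def shearLastRow (c : R) : Matrix (Fin (n + 1)) (Fin (n + 1)) R :=
  of fun i j => if i = j then 1 else if i = Fin.last n then c else 0

theorem shearLastRow_zero : (shearLastRow 0 : Matrix (Fin (n + 1)) (Fin (n + 1)) R) = 1 := by
  ext i j
  simp [shearLastRow, one_apply]

theorem shearLastRow_mul_shearLastRow (c d : R) :
    (shearLastRow c * shearLastRow d : Matrix (Fin (n + 1)) (Fin (n + 1)) R) =
      shearLastRow (c + d) := by
  ext i j
  induction i using Fin.lastCases <;> induction j using Fin.lastCases <;>
    simp [shearLastRow, mul_apply, Fin.sum_univ_castSucc, Fin.castSucc_ne_last,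
      (Fin.castSucc_ne_last _).symm]

theorem shearLastRow_one_mul_apply_last (M : Matrix (Fin (n + 1)) (Fin (n + 1)) R)
    (j : Fin (n + 1)) :
    (shearLastRow 1 * M : Matrix _ _ R) (Fin.last n) j = ∑ k, M k j := by
  simp [shearLastRow, mul_apply, Fin.sum_univ_castSucc]

theorem shearLastRow_mul_apply_castSucc (c : R) (M : Matrix (Fin (n + 1)) (Fin (n + 1)) R)
    (i : Fin n) (j : Fin (n + 1)) :
    (shearLastRow c * M : Matrix _ _ R) i.castSucc j = M i.castSucc j := by
  simp [shearLastRow, mul_apply]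

theorem mul_shearLastRow_apply_castSucc (c : R) (M : Matrix (Fin (n + 1)) (Fin (n + 1)) R)
    (i : Fin (n + 1)) (j : Fin n) :
    (M * shearLastRow c : Matrix _ _ R) i j.castSucc = M i j.castSucc + c * M i (Fin.last n) := by
  simp [shearLastRow, mul_apply, Fin.sum_univ_castSucc, (Fin.castSucc_ne_last j).symm, mul_comm]

theorem charpoly_eq_X_mul_charpoly_of_sum_rows_eq_zero (A : Matrix (Fin (n + 1)) (Fin (n + 1)) R)
    (hA : ∀ j, ∑ i, A i j = 0) :
    A.charpoly =
      X * (of fun i j : Fin n => A i.castSucc j.castSucc - A i.castSucc (Fin.last n)).charpoly := by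
  have hconj : (shearLastRow 1 * A * shearLastRow (-1)).charpoly = A.charpoly := by
    rw [charpoly_mul_comm, ← mul_assoc, shearLastRow_mul_shearLastRow, neg_add_cancel,
      shearLastRow_zero, one_mul]
  have hlast : ∀ j, (shearLastRow 1 * A : Matrix _ _ R) (Fin.last n) j = 0 := fun j => by
    rw [shearLastRow_one_mul_apply_last, hA]
  have hconj_last :
      ∀ j, (shearLastRow 1 * A * shearLastRow (-1) : Matrix _ _ R) (Fin.last n) j = 0 := by
    intro j
    simp only [mul_apply, hlast, zero_mul, Finset.sum_const_zero]
  rw [← hconj, charpoly_eq_mul_charpoly_submatrix_castSucc _ fun j => hconj_last _, hconj_last,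
    C_0, sub_zero]
  congr 2
  ext i j
  simp [mul_shearLastRow_apply_castSucc, shearLastRow_mul_apply_castSucc, sub_eq_add_neg]

end Matrix

/-- If the third row of a 3×3 real matrix `A` is the negation of the sum of its first two
rows, and `B` is the 2×2 matrix with entries `B i j = A i j − A i 2`, then the
characteristic polynomial of `A` factors as `p_A(X) = X · p_B(X)`. -/
theorem charpoly_factor_of_row_sum_zero (A : Matrix (Fin 3) (Fin 3) ℝ)
    (hA : ∀ j : Fin 3, A 2 j = -(A 0 j + A 1 j))
    (B : Matrix (Fin 2) (Fin 2) ℝ)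
    (hB : ∀ i j : Fin 2, B i j = A i.castSucc j.castSucc - A i.castSucc 2) :
    A.charpoly = Polynomial.X * B.charpoly := by
  obtain rfl : B = Matrix.of fun i j => A i.castSucc j.castSucc - A i.castSucc (Fin.last 2) :=
    Matrix.ext hB
  refine A.charpoly_eq_X_mul_charpoly_of_sum_rows_eq_zero fun j => ?_
  rw [Fin.sum_univ_three, hA]
  ring
end

section
/- Let λ > 0, s1, s2, sB > 0, and let α, β ≥ 1 be real with α ≠ β + 1, and set δ = 1/(β + 1 − α). Define D = 1 + (s1/sB)^δ + (s2/sB)^δ and E7 = ((s1/sB)^δ / D, (s2/sB)^δ / D, 1/D). Then E7 is an equilibrium of the language competition system (F1 = F2 = F3 = 0 at E7), its three coordinates are strictly positive, and they sum to 1. -/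
open Real

set_option linter.unusedVariables false

/-- Right-hand side for the first monolingual group. -/
noncomputable def F1 (lam s1 s2 sB α β m1 m2 b : ℝ) : ℝ :=
  lam * s1 * m1 ^ α * b ^ (β + 1) - lam * sB * b ^ α * m1 ^ (β + 1)

/-- Right-hand side for the second monolingual group. -/
noncomputable def F2 (lam s1 s2 sB α β m1 m2 b : ℝ) : ℝ :=
  lam * s2 * m2 ^ α * b ^ (β + 1) - lam * sB * b ^ α * m2 ^ (β + 1)

/-- Right-hand side for the bilingual group. -/
noncomputable def F3 (lam s1 s2 sB α β m1 m2 b : ℝ) : ℝ :=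
  lam * sB * b ^ α * m1 ^ (β + 1) + lam * sB * b ^ α * m2 ^ (β + 1)
    - lam * s1 * m1 ^ α * b ^ (β + 1) - lam * s2 * m2 ^ α * b ^ (β + 1)

/-! For `m, b > 0`, dividing by `m ^ α * b ^ α` shows that the gain and loss terms of a
monolingual group `m` balance against the bilinguals `b` when `(m / b) ^ (β + 1 - α) = s / sB`.
The coordinates of `E7` are normalised so that `m i / b = (s i / sB) ^ δ`, which solves this.
The bilingual equation then holds because `F1 + F2 + F3 = 0` identically: the total population
is conserved. -/

lemma F1_add_F2_add_F3_eq_zero (lam s1 s2 sB α β m1 m2 b : ℝ) :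
    F1 lam s1 s2 sB α β m1 m2 b + F2 lam s1 s2 sB α β m1 m2 b
      + F3 lam s1 s2 sB α β m1 m2 b = 0 := by
  unfold F1 F2 F3
  ring

lemma gain_eq_loss_of_div_rpow_eq {s sB α β m b : ℝ} (hm : 0 < m) (hb : 0 < b) (hsB : sB ≠ 0)
    (h : (m / b) ^ (β + 1 - α) = s / sB) :
    s * m ^ α * b ^ (β + 1) = sB * b ^ α * m ^ (β + 1) := by
  have hs : s = sB * (m ^ (β + 1 - α) / b ^ (β + 1 - α)) := by
    rw [← div_rpow hm.le hb.le, h]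
    field_simp
  have hsplit : ∀ x : ℝ, 0 < x → x ^ (β + 1) = x ^ α * x ^ (β + 1 - α) := fun x hx => by
    rw [← rpow_add hx]
    ring_nf
  have hbc : 0 < b ^ (β + 1 - α) := rpow_pos_of_pos hb _
  rw [hs, hsplit m hm, hsplit b hb]
  field_simp

theorem E7_is_equilibrium_general (lam s1 s2 sB α β δ : ℝ)
    (hs1 : 0 < s1) (hs2 : 0 < s2) (hsB : 0 < sB)
    (hne : α ≠ β + 1) (hδ : δ = 1 / (β + 1 - α)) :
    let D : ℝ := 1 + (s1 / sB) ^ δ + (s2 / sB) ^ δ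
    let m1 : ℝ := (s1 / sB) ^ δ / D
    let m2 : ℝ := (s2 / sB) ^ δ / D
    let b : ℝ := 1 / D
    (F1 lam s1 s2 sB α β m1 m2 b = 0 ∧
     F2 lam s1 s2 sB α β m1 m2 b = 0 ∧
     F3 lam s1 s2 sB α β m1 m2 b = 0) ∧
    (0 < m1 ∧ 0 < m2 ∧ 0 < b) ∧
    m1 + m2 + b = 1 := by
  intro D m1 m2 b
  have hD : 0 < D := by positivity
  have hc : β + 1 - α ≠ 0 := sub_ne_zero.mpr hne.symm
  have balance : ∀ s, 0 < s →
      s * ((s / sB) ^ δ / D) ^ α * b ^ (β + 1) = sB * b ^ α * ((s / sB) ^ δ / D) ^ (β + 1) :=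
    fun s hs => gain_eq_loss_of_div_rpow_eq (by positivity) (by positivity) hsB.ne' (by
      rw [div_div_div_cancel_right₀ hD.ne', div_one, hδ, one_div,
        rpow_inv_rpow (by positivity) hc])
  have hF1 : F1 lam s1 s2 sB α β m1 m2 b = 0 := by
    unfold F1; linear_combination lam * balance s1 hs1
  have hF2 : F2 lam s1 s2 sB α β m1 m2 b = 0 := by
    unfold F2; linear_combination lam * balance s2 hs2
  have hF3 : F3 lam s1 s2 sB α β m1 m2 b = 0 := by
    linear_combination F1_add_F2_add_F3_eq_zero lam s1 s2 sB α β m1 m2 b - hF1 - hF2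
  refine ⟨⟨hF1, hF2, hF3⟩, ⟨by positivity, by positivity, by positivity⟩, ?_⟩
  calc m1 + m2 + b = ((s1 / sB) ^ δ + (s2 / sB) ^ δ + 1) / D := by ring
    _ = 1 := (div_eq_one_iff_eq hD.ne').mpr (by ring)

/-- The interior coexistence point `E7` is an equilibrium of the language competition
system, has strictly positive coordinates, and its coordinates sum to 1. -/
theorem E7_is_equilibrium (lam s1 s2 sB α β δ : ℝ)
    (hlam : 0 < lam) (hs1 : 0 < s1) (hs2 : 0 < s2) (hsB : 0 < sB)
    (hα : 1 ≤ α) (hβ : 1 ≤ β) (hne : α ≠ β + 1) (hδ : δ = 1 / (β + 1 - α)) :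
    let D : ℝ := 1 + (s1 / sB) ^ δ + (s2 / sB) ^ δ
    let m1 : ℝ := (s1 / sB) ^ δ / D
    let m2 : ℝ := (s2 / sB) ^ δ / D
    let b : ℝ := 1 / D
    (F1 lam s1 s2 sB α β m1 m2 b = 0 ∧
     F2 lam s1 s2 sB α β m1 m2 b = 0 ∧
     F3 lam s1 s2 sB α β m1 m2 b = 0) ∧
    (0 < m1 ∧ 0 < m2 ∧ 0 < b) ∧
    m1 + m2 + b = 1 :=
  E7_is_equilibrium_general lam s1 s2 sB α β δ hs1 hs2 hsB hne hδ
end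

section
/- Let λ > 0, s1, s2, sB > 0, and let α, β ≥ 1 be real with α ≠ β + 1, and set δ = 1/(β + 1 − α). Define E5 = ((s1/sB)^δ / (1 + (s1/sB)^δ), 0, 1 / (1 + (s1/sB)^δ)). Then E5 is an equilibrium of the language competition system (F1 = F2 = F3 = 0 at E5), its first and third coordinates are strictly positive, and its coordinates sum to 1. -/
open Real

set_option linter.unusedVariables false

/-! Since `F1 + F2 + F3 = 0`, it suffices that `F1` and `F2` vanish. `F2` vanishes because
`m2 = 0`; after dividing by `m1 ^ α * b ^ α`, `F1 = 0` reads `s1 * b ^ (β + 1 - α) = sB * m1 ^ (β + 1 - α)`,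
which holds because `m1 / b = (s1 / sB) ^ δ`. -/

section LanguageCompetition

variable {lam s1 s2 sB α β m1 m2 b : ℝ}

theorem F3_eq_neg_F1_sub_F2 :
    F3 lam s1 s2 sB α β m1 m2 b =
      -F1 lam s1 s2 sB α β m1 m2 b - F2 lam s1 s2 sB α β m1 m2 b := by
  unfold F1 F2 F3
  ring

theorem F2_eq_zero_of_extinct (hα : α ≠ 0) (hβ : β + 1 ≠ 0) :
    F2 lam s1 s2 sB α β m1 0 b = 0 := by
  simp only [F2, zero_rpow hα, zero_rpow hβ, mul_zero, zero_mul, sub_zero]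

theorem F1_eq_zero_of_div_rpow_eq (hm1 : 0 < m1) (hb : 0 < b) (hsB : sB ≠ 0)
    (h : (m1 / b) ^ (β + 1 - α) = s1 / sB) : F1 lam s1 s2 sB α β m1 m2 b = 0 := by
  have hs1 : s1 = sB * (m1 ^ (β + 1 - α) / b ^ (β + 1 - α)) := by
    rw [← div_rpow hm1.le hb.le, h]
    field_simp
  have hsplit : ∀ x : ℝ, 0 < x → x ^ (β + 1) = x ^ (β + 1 - α) * x ^ α := fun x hx => by
    rw [← rpow_add hx, sub_add_cancel]
  rw [F1, hsplit m1 hm1, hsplit b hb, hs1]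
  field_simp
  ring

end LanguageCompetition

theorem E5_is_equilibrium_general (lam s1 s2 sB α β δ : ℝ)
    (hs1 : 0 < s1) (hsB : 0 < sB)
    (hα : 1 ≤ α) (hβ : 1 ≤ β) (hne : α ≠ β + 1) (hδ : δ = 1 / (β + 1 - α)) :
    let m1 : ℝ := (s1 / sB) ^ δ / (1 + (s1 / sB) ^ δ)
    let b : ℝ := 1 / (1 + (s1 / sB) ^ δ)
    (F1 lam s1 s2 sB α β m1 0 b = 0 ∧
     F2 lam s1 s2 sB α β m1 0 b = 0 ∧
     F3 lam s1 s2 sB α β m1 0 b = 0) ∧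
    (0 < m1 ∧ 0 < b) ∧
    m1 + 0 + b = 1 := by
  intro m1 b
  have hs : 0 < s1 / sB := div_pos hs1 hsB
  have hr : 0 < (s1 / sB) ^ δ := rpow_pos_of_pos hs δ
  have hm1 : 0 < m1 := by positivity
  have hb : 0 < b := by positivity
  have hratio : (m1 / b) ^ (β + 1 - α) = s1 / sB := by
    have hd : β + 1 - α ≠ 0 := sub_ne_zero.2 hne.symm
    have hdiv : m1 / b = (s1 / sB) ^ (β + 1 - α)⁻¹ := by
      simp only [m1, b, hδ, one_div]
      field_simp
    rw [hdiv, rpow_inv_rpow hs.le hd]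
  have hF1 : F1 lam s1 s2 sB α β m1 0 b = 0 := F1_eq_zero_of_div_rpow_eq hm1 hb hsB.ne' hratio
  have hF2 : F2 lam s1 s2 sB α β m1 0 b = 0 := F2_eq_zero_of_extinct (by positivity) (by positivity)
  refine ⟨⟨hF1, hF2, by rw [F3_eq_neg_F1_sub_F2, hF1, hF2, neg_zero, sub_zero]⟩, ⟨hm1, hb⟩, ?_⟩
  simp only [m1, b]
  field_simp
  ring

/-- The boundary point `E5` (second monolingual group extinct) is an equilibrium of the
language competition system, its first and third coordinates are strictly positive,
and its coordinates sum to 1. -/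
theorem E5_is_equilibrium (lam s1 s2 sB α β δ : ℝ)
    (hlam : 0 < lam) (hs1 : 0 < s1) (hs2 : 0 < s2) (hsB : 0 < sB)
    (hα : 1 ≤ α) (hβ : 1 ≤ β) (hne : α ≠ β + 1) (hδ : δ = 1 / (β + 1 - α)) :
    let m1 : ℝ := (s1 / sB) ^ δ / (1 + (s1 / sB) ^ δ)
    let b : ℝ := 1 / (1 + (s1 / sB) ^ δ)
    (F1 lam s1 s2 sB α β m1 0 b = 0 ∧
     F2 lam s1 s2 sB α β m1 0 b = 0 ∧
     F3 lam s1 s2 sB α β m1 0 b = 0) ∧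
    (0 < m1 ∧ 0 < b) ∧
    m1 + 0 + b = 1 :=
  E5_is_equilibrium_general lam s1 s2 sB α β δ hs1 hsB hα hβ hne hδ
end

section
/- Let λ > 0, s1, s2, sB > 0, and let α, β ≥ 1 be real with α ≠ β + 1, and set δ = 1/(β + 1 − α). If (m1, m2, b) satisfies m1 > 0, m2 > 0, b > 0, m1 + m2 + b = 1, and F1(m1,m2,b) = F2(m1,m2,b) = F3(m1,m2,b) = 0, then (m1, m2, b) = E7, i.e. m1 = (s1/sB)^δ / D, m2 = (s2/sB)^δ / D, b = 1/D, where D = 1 + (s1/sB)^δ + (s2/sB)^δ. In other words, E7 is the unique interior equilibrium of the system on the simplex. -/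
open Real

set_option linter.unusedVariables false

/-!
Each monolingual equation `F_i = 0` is a balance between one monolingual group and the
bilinguals alone, and it forces `s_i / sB = (m_i / b) ^ (β + 1 - α)`, i.e.
`m_i / b = (s_i / sB) ^ δ`. Hence `D = 1 + m1 / b + m2 / b = 1 / b` on the simplex, which
gives all three coordinates.
-/

section ExchangeBalance

variable {lam s sB α β x b : ℝ}

theorem div_eq_div_rpow_of_exchange_balance (hlam : lam ≠ 0) (hsB : sB ≠ 0)
    (hx : 0 < x) (hb : 0 < b)
    (h : lam * s * x ^ α * b ^ (β + 1) - lam * sB * b ^ α * x ^ (β + 1) = 0) :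
    s / sB = (x / b) ^ (β + 1 - α) := by
  have hbal : s * x ^ α * b ^ (β + 1) = sB * b ^ α * x ^ (β + 1) := by
    apply mul_left_cancel₀ hlam
    linear_combination h
  have hxα := (rpow_pos_of_pos hx α).ne'
  have hbβ := (rpow_pos_of_pos hb (β + 1)).ne'
  rw [div_rpow hx.le hb.le, rpow_sub hx, rpow_sub hb, div_eq_div_iff hsB (by positivity)]
  field_simp
  linear_combination hbal

theorem rpow_one_div_eq_div_of_exchange_balance (hlam : lam ≠ 0) (hsB : sB ≠ 0)
    (hx : 0 < x) (hb : 0 < b) (hαβ : β + 1 - α ≠ 0)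
    (h : lam * s * x ^ α * b ^ (β + 1) - lam * sB * b ^ α * x ^ (β + 1) = 0) :
    (s / sB) ^ (1 / (β + 1 - α)) = x / b := by
  rw [div_eq_div_rpow_of_exchange_balance hlam hsB hx hb h, ← rpow_mul (div_pos hx hb).le,
    mul_one_div_cancel hαβ, rpow_one]

end ExchangeBalance

theorem E7_unique_interior_equilibrium_general (lam s1 s2 sB α β δ : ℝ)
    (hlam : 0 < lam) (hsB : 0 < sB)
    (hne : α ≠ β + 1) (hδ : δ = 1 / (β + 1 - α))
    (m1 m2 b : ℝ) (hm1 : 0 < m1) (hm2 : 0 < m2) (hb : 0 < b)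
    (hsum : m1 + m2 + b = 1)
    (h1 : F1 lam s1 s2 sB α β m1 m2 b = 0)
    (h2 : F2 lam s1 s2 sB α β m1 m2 b = 0) :
    let D : ℝ := 1 + (s1 / sB) ^ δ + (s2 / sB) ^ δ
    m1 = (s1 / sB) ^ δ / D ∧ m2 = (s2 / sB) ^ δ / D ∧ b = 1 / D := by
  intro D
  have hαβ : β + 1 - α ≠ 0 := sub_ne_zero.mpr hne.symm
  subst hδ
  have k1 : (s1 / sB) ^ (1 / (β + 1 - α)) = m1 / b :=
    rpow_one_div_eq_div_of_exchange_balance hlam.ne' hsB.ne' hm1 hb hαβ h1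
  have k2 : (s2 / sB) ^ (1 / (β + 1 - α)) = m2 / b :=
    rpow_one_div_eq_div_of_exchange_balance hlam.ne' hsB.ne' hm2 hb hαβ h2
  have hD : D = 1 / b := by
    simp only [D, k1, k2]
    field_simp
    linarith
  simp only [hD, k1, k2]
  refine ⟨?_, ?_, ?_⟩ <;> field_simp

/-- `E7` is the unique interior equilibrium of the language competition system on the
simplex. -/
theorem E7_unique_interior_equilibrium (lam s1 s2 sB α β δ : ℝ)
    (hlam : 0 < lam) (hs1 : 0 < s1) (hs2 : 0 < s2) (hsB : 0 < sB)
    (hα : 1 ≤ α) (hβ : 1 ≤ β) (hne : α ≠ β + 1) (hδ : δ = 1 / (β + 1 - α))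
    (m1 m2 b : ℝ) (hm1 : 0 < m1) (hm2 : 0 < m2) (hb : 0 < b)
    (hsum : m1 + m2 + b = 1)
    (h1 : F1 lam s1 s2 sB α β m1 m2 b = 0)
    (h2 : F2 lam s1 s2 sB α β m1 m2 b = 0)
    (h3 : F3 lam s1 s2 sB α β m1 m2 b = 0) :
    let D : ℝ := 1 + (s1 / sB) ^ δ + (s2 / sB) ^ δ
    m1 = (s1 / sB) ^ δ / D ∧ m2 = (s2 / sB) ^ δ / D ∧ b = 1 / D :=
  E7_unique_interior_equilibrium_general lam s1 s2 sB α β δ hlam hsB hne hδ m1 m2 b hm1 hm2 hb hsum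
    h1 h2
end

section
/- Let λ > 0, s1, s2, sB > 0, and let α, β ≥ 1 be real with α ≠ β + 1, and set δ = 1/(β + 1 − α). If (0, m2, b) satisfies m2 > 0, b > 0, m2 + b = 1, and F1(0,m2,b) = F2(0,m2,b) = F3(0,m2,b) = 0, then m2 = (s2/sB)^δ / (1 + (s2/sB)^δ) and b = 1/(1 + (s2/sB)^δ). In other words, E6 is the unique equilibrium on the open edge of the simplex where m1 = 0 and m2, b > 0. -/
/-!
On the edge `m1 = 0` the equation `F2 = 0` is the balance
`s2 m2^α b^(β+1) = sB b^α m2^(β+1)`, which for positive `m2, b` says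
`(m2 / b)^(β+1-α) = s2 / sB`. Taking the `δ`-th root determines the ratio `m2 / b`,
and `m2 + b = 1` then determines the point.
-/

open Real

set_option linter.unusedVariables false

theorem F2_eq_zero_iff {lam s1 s2 sB α β m1 m2 b : ℝ} (hlam : lam ≠ 0) :
    F2 lam s1 s2 sB α β m1 m2 b = 0 ↔
      s2 * m2 ^ α * b ^ (β + 1) = sB * b ^ α * m2 ^ (β + 1) := by
  rw [F2]
  constructor <;> intro h
  · exact mul_left_cancel₀ hlam (by linear_combination h)
  · linear_combination lam * h

theorem div_rpow_sub_eq_div_of_mul_eq {x y s t p q : ℝ} (hx : 0 < x) (hy : 0 < y)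
    (ht : t ≠ 0) (h : s * x ^ p * y ^ q = t * y ^ p * x ^ q) :
    (x / y) ^ (q - p) = s / t := by
  have hsplit : ∀ {z : ℝ}, 0 < z → z ^ q = z ^ (q - p) * z ^ p := fun hz => by
    rw [← rpow_add hz, sub_add_cancel]
  rw [hsplit hx, hsplit hy] at h
  have hbalance : s * y ^ (q - p) = t * x ^ (q - p) := by
    have hxy : x ^ p * y ^ p ≠ 0 := by positivity
    apply mul_right_cancel₀ hxy
    linear_combination h
  rw [div_rpow hx.le hy.le, div_eq_div_iff (by positivity) ht]
  linear_combination -hbalance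

theorem eq_div_one_add_of_div_eq {m b r : ℝ} (hb : b ≠ 0) (hsum : m + b = 1)
    (hr : m / b = r) : m = r / (1 + r) ∧ b = 1 / (1 + r) := by
  have hinv : 1 + r = 1 / b := by
    rw [← hr]
    field_simp
    linarith
  refine ⟨?_, by rw [hinv, one_div_one_div]⟩
  rw [hinv, ← hr]
  field_simp

theorem E6_unique_edge_equilibrium_general (lam s1 s2 sB α β δ : ℝ)
    (hlam : 0 < lam) (hsB : 0 < sB)
    (hne : α ≠ β + 1) (hδ : δ = 1 / (β + 1 - α))
    (m2 b : ℝ) (hm2 : 0 < m2) (hb : 0 < b) (hsum : m2 + b = 1)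
    (h2 : F2 lam s1 s2 sB α β 0 m2 b = 0) :
    m2 = (s2 / sB) ^ δ / (1 + (s2 / sB) ^ δ) ∧ b = 1 / (1 + (s2 / sB) ^ δ) := by
  have hratio : (m2 / b) ^ (β + 1 - α) = s2 / sB :=
    div_rpow_sub_eq_div_of_mul_eq hm2 hb hsB.ne' ((F2_eq_zero_iff hlam.ne').1 h2)
  have hroot : m2 / b = (s2 / sB) ^ δ := by
    rw [hδ, one_div, ← hratio,
      rpow_rpow_inv (div_pos hm2 hb).le (sub_ne_zero.2 hne.symm)]
  exact eq_div_one_add_of_div_eq hb.ne' hsum hroot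

/-- `E6` is the unique equilibrium on the open edge of the simplex where `m1 = 0`
and `m2, b > 0`. -/
theorem E6_unique_edge_equilibrium (lam s1 s2 sB α β δ : ℝ)
    (hlam : 0 < lam) (hs1 : 0 < s1) (hs2 : 0 < s2) (hsB : 0 < sB)
    (hα : 1 ≤ α) (hβ : 1 ≤ β) (hne : α ≠ β + 1) (hδ : δ = 1 / (β + 1 - α))
    (m2 b : ℝ) (hm2 : 0 < m2) (hb : 0 < b) (hsum : m2 + b = 1)
    (h1 : F1 lam s1 s2 sB α β 0 m2 b = 0)
    (h2 : F2 lam s1 s2 sB α β 0 m2 b = 0)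
    (h3 : F3 lam s1 s2 sB α β 0 m2 b = 0) :
    m2 = (s2 / sB) ^ δ / (1 + (s2 / sB) ^ δ) ∧ b = 1 / (1 + (s2 / sB) ^ δ) :=
  E6_unique_edge_equilibrium_general lam s1 s2 sB α β δ hlam hsB hne hδ m2 b hm2 hb hsum h2
end

section
/- Consider the reduced two-dimensional language competition system obtained by substituting b = 1 − m1 − m2: f(m1,m2) = λ s1 m1^α (1−m1−m2)^(β+1) − λ sB (1−m1−m2)^α m1^(β+1) and g(m1,m2) = λ s2 m2^α (1−m1−m2)^(β+1) − λ sB (1−m1−m2)^α m2^(β+1). If α > 1 and β > 0 are real and (m1*, m2*) satisfies m1* > 0, m2* > 0 and m1* + m2* = 1 (so b = 0), then the map (m1,m2) ↦ (f(m1,m2), g(m1,m2)) has Fréchet derivative equal to the zero linear map at (m1*, m2*); i.e. the Jacobian J4 at every equilibrium of the family E4 is the zero matrix. -/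
open Real

set_option linter.unusedVariables false

/-- Right-hand side of the reduced planar system for the first monolingual group,
obtained by substituting `b = 1 - m1 - m2`. -/
noncomputable def fRed (lam s1 s2 sB α β m1 m2 : ℝ) : ℝ :=
  lam * s1 * m1 ^ α * (1 - m1 - m2) ^ (β + 1)
    - lam * sB * (1 - m1 - m2) ^ α * m1 ^ (β + 1)

/-- Right-hand side of the reduced planar system for the second monolingual group. -/
noncomputable def gRed (lam s1 s2 sB α β m1 m2 : ℝ) : ℝ :=
  lam * s2 * m2 ^ α * (1 - m1 - m2) ^ (β + 1)
    - lam * sB * (1 - m1 - m2) ^ α * m2 ^ (β + 1)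

/-! Every term of the reduced field is a product with a factor `b ^ γ`, `γ > 1`, of the
bilingual fraction `b = 1 - m1 - m2`. On `E4` we have `b = 0`, and `t ↦ t ^ γ` vanishes together
with its derivative at `0`, so by the product rule every term has zero derivative there. -/

section VanishingFactor

variable {E : Type*} [NormedAddCommGroup E] [NormedSpace ℝ E] {p : E}

theorem HasFDerivAt.rpow_const_of_eq_zero {u : E → ℝ} {u' : E →L[ℝ] ℝ}
    (hu : HasFDerivAt u u' p) (hup : u p = 0) {γ : ℝ} (hγ : 1 < γ) :
    HasFDerivAt (fun x => u x ^ γ) (0 : E →L[ℝ] ℝ) p := by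
  simpa [hup, zero_rpow (by linarith : γ - 1 ≠ 0)] using hu.rpow_const (Or.inr hγ.le)

theorem HasFDerivAt.mul_of_eq_zero_right {k h : E → ℝ} (hk : DifferentiableAt ℝ k p)
    (hh : HasFDerivAt h (0 : E →L[ℝ] ℝ) p) (hhp : h p = 0) :
    HasFDerivAt (fun x => k x * h x) (0 : E →L[ℝ] ℝ) p :=
  (hk.hasFDerivAt.mul hh).congr_fderiv (by simp [hhp])

theorem HasFDerivAt.mul_of_eq_zero_left {k h : E → ℝ} (hk : DifferentiableAt ℝ k p)
    (hh : HasFDerivAt h (0 : E →L[ℝ] ℝ) p) (hhp : h p = 0) :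
    HasFDerivAt (fun x => h x * k x) (0 : E →L[ℝ] ℝ) p := by
  simpa only [mul_comm] using hh.mul_of_eq_zero_right hk hhp

theorem hasFDerivAt_transfer_eq_zero {x u : E → ℝ} (hx : DifferentiableAt ℝ x p)
    (hu : DifferentiableAt ℝ u p) (hup : u p = 0) {lam s sB α β : ℝ} (hα : 1 < α) (hβ : 0 < β) :
    HasFDerivAt (fun q => lam * s * x q ^ α * u q ^ (β + 1) - lam * sB * u q ^ α * x q ^ (β + 1))
      (0 : E →L[ℝ] ℝ) p := by
  have hβ1 : 1 < β + 1 := by linarith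
  have huα : u p ^ α = 0 := by rw [hup, zero_rpow (by linarith)]
  have huβ : u p ^ (β + 1) = 0 := by rw [hup, zero_rpow (by linarith)]
  have hgain : HasFDerivAt (fun q => lam * s * x q ^ α * u q ^ (β + 1)) (0 : E →L[ℝ] ℝ) p :=
    (hu.hasFDerivAt.rpow_const_of_eq_zero hup hβ1).mul_of_eq_zero_right
      ((hx.rpow_const (Or.inr hα.le)).const_mul _) huβ
  have hloss : HasFDerivAt (fun q => lam * sB * u q ^ α * x q ^ (β + 1)) (0 : E →L[ℝ] ℝ) p :=
    ((hu.hasFDerivAt.rpow_const_of_eq_zero hup hα).mul_of_eq_zero_right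
        (differentiableAt_const _) huα).mul_of_eq_zero_left
      (hx.rpow_const (Or.inr hβ1.le)) (by rw [huα, mul_zero])
  exact (hgain.sub hloss).congr_fderiv (sub_zero _)

end VanishingFactor

theorem jacobian_zero_at_E4_general (lam s1 s2 sB α β : ℝ)
    (hα : 1 < α) (hβ : 0 < β)
    (m1s m2s : ℝ) (hsum : m1s + m2s = 1) :
    HasFDerivAt
      (fun p : ℝ × ℝ => (fRed lam s1 s2 sB α β p.1 p.2, gRed lam s1 s2 sB α β p.1 p.2))
      (0 : ℝ × ℝ →L[ℝ] ℝ × ℝ) (m1s, m2s) := by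
  have hb : DifferentiableAt ℝ (fun p : ℝ × ℝ => 1 - p.1 - p.2) (m1s, m2s) := by fun_prop
  have hb0 : 1 - (m1s, m2s).1 - (m1s, m2s).2 = 0 := by dsimp only; linarith
  have hf := hasFDerivAt_transfer_eq_zero (lam := lam) (s := s1) (sB := sB)
    differentiableAt_fst hb hb0 hα hβ
  have hg := hasFDerivAt_transfer_eq_zero (lam := lam) (s := s2) (sB := sB)
    differentiableAt_snd hb hb0 hα hβ
  exact (hf.prodMk hg).congr_fderiv (by ext <;> simp)

/-- At every equilibrium of the family `E4 = (m1*, 1 - m1*, 0)` (bilingual group extinct),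
the Jacobian of the reduced planar system is the zero matrix: the map
`(m1, m2) ↦ (f(m1,m2), g(m1,m2))` has Fréchet derivative zero at `(m1*, m2*)`. -/
theorem jacobian_zero_at_E4 (lam s1 s2 sB α β : ℝ)
    (hlam : 0 < lam) (hs1 : 0 < s1) (hs2 : 0 < s2) (hsB : 0 < sB)
    (hα : 1 < α) (hβ : 0 < β)
    (m1s m2s : ℝ) (hm1 : 0 < m1s) (hm2 : 0 < m2s) (hsum : m1s + m2s = 1) :
    HasFDerivAt
      (fun p : ℝ × ℝ => (fRed lam s1 s2 sB α β p.1 p.2, gRed lam s1 s2 sB α β p.1 p.2))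
      (0 : ℝ × ℝ →L[ℝ] ℝ × ℝ) (m1s, m2s) :=
  jacobian_zero_at_E4_general lam s1 s2 sB α β hα hβ m1s m2s hsum
end

section
/- Fix real statuses s1, s2 > 0 and a real exponent δ > 0. Define, for sB > 0, the coordinates of the interior equilibrium E7: m1*(sB) = (s1/sB)^δ / D(sB), m2*(sB) = (s2/sB)^δ / D(sB), b*(sB) = 1 / D(sB), where D(sB) = 1 + (s1/sB)^δ + (s2/sB)^δ. Then on (0, ∞) the function b* is strictly increasing in sB, and the functions m1* and m2* are strictly decreasing in sB. -/
/-!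
Each `(sᵢ / sB) ^ δ` is strictly decreasing in `sB`, so `D` decreases and `b* = 1 / D` increases.
For the monolingual fractions, write `u = (s₁ / sB) ^ δ`; since `s₂ / sB = (s₂ / s₁) * (s₁ / sB)`,
the other power is the constant multiple `(s₂ / s₁) ^ δ * u`, so `m₁* = u / (1 + c * u)` with
`c = 1 + (s₂ / s₁) ^ δ`: an increasing function of a decreasing one.
-/

open Real Set

lemma strictAntiOn_div_rpow {s δ : ℝ} (hs : 0 < s) (hδ : 0 < δ) :
    StrictAntiOn (fun x : ℝ => (s / x) ^ δ) (Ioi 0) := fun _ hx _ _ hxy =>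
  rpow_lt_rpow (div_pos hs (lt_trans hx hxy)).le (div_lt_div_of_pos_left hs hx hxy) hδ

lemma strictMonoOn_div_one_add_mul {c : ℝ} (hc : 0 ≤ c) :
    StrictMonoOn (fun t : ℝ => t / (1 + c * t)) (Ici 0) := by
  intro x hx y hy hxy
  rw [mem_Ici] at hx hy
  rw [div_lt_div_iff₀ (by positivity) (by positivity)]
  nlinarith

lemma div_rpow_mul_div_rpow {s s' x δ : ℝ} (hs : 0 < s) (hs' : 0 ≤ s') (hx : 0 ≤ x) :
    (s' / s) ^ δ * (s / x) ^ δ = (s' / x) ^ δ := by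
  rw [← mul_rpow (by positivity) (by positivity), div_mul_div_cancel₀ hs.ne']

lemma strictAntiOn_rpow_div_one_add_rpow_add_rpow {s s' δ : ℝ} (hs : 0 < s) (hs' : 0 ≤ s')
    (hδ : 0 < δ) :
    StrictAntiOn (fun x : ℝ => (s / x) ^ δ / (1 + (s / x) ^ δ + (s' / x) ^ δ)) (Ioi 0) := by
  have hc : 0 ≤ 1 + (s' / s) ^ δ := by positivity
  refine ((strictMonoOn_div_one_add_mul hc).comp_strictAntiOn (strictAntiOn_div_rpow hs hδ)
    fun x hx => ?_).congr fun x hx => ?_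
  · exact rpow_nonneg (div_pos hs hx).le δ
  · rw [← div_rpow_mul_div_rpow hs hs' (le_of_lt hx), Function.comp_apply]
    ring

/-- Monotone dependence of the interior equilibrium `E7` on the bilingual status `sB`:
the bilingual fraction `b*` is strictly increasing in `sB`, while both monolingual
fractions `m1*`, `m2*` are strictly decreasing in `sB`, on `(0, ∞)`. -/
theorem E7_monotone_in_bilingual_status (s1 s2 δ : ℝ)
    (hs1 : 0 < s1) (hs2 : 0 < s2) (hδ : 0 < δ) :
    let D : ℝ → ℝ := fun sB => 1 + (s1 / sB) ^ δ + (s2 / sB) ^ δ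
    let m1star : ℝ → ℝ := fun sB => (s1 / sB) ^ δ / D sB
    let m2star : ℝ → ℝ := fun sB => (s2 / sB) ^ δ / D sB
    let bstar : ℝ → ℝ := fun sB => 1 / D sB
    StrictMonoOn bstar (Ioi (0 : ℝ)) ∧
    StrictAntiOn m1star (Ioi (0 : ℝ)) ∧
    StrictAntiOn m2star (Ioi (0 : ℝ)) := by
  intro D m1star m2star bstar
  have hu₁ := strictAntiOn_div_rpow hs1 hδ
  have hu₂ := strictAntiOn_div_rpow hs2 hδ
  refine ⟨fun x hx y hy hxy => ?_, strictAntiOn_rpow_div_one_add_rpow_add_rpow hs1 hs2.le hδ,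
    (strictAntiOn_rpow_div_one_add_rpow_add_rpow hs2 hs1.le hδ).congr fun x _ => ?_⟩
  · have hDy : 0 < D y := by
      have : (0 : ℝ) < y := hy
      positivity
    exact one_div_lt_one_div_of_lt hDy (by linarith [hu₁ hx hy hxy, hu₂ hx hy hxy])
  · simp only [m2star, D, add_right_comm]
end
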